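/- arXiv:0803.2284 — 9 statements merged into one kernel-verified Lean document; each statement's English description precedes it below -/
import Mathlib

section
/- Let G be a second countable Hausdorff étale groupoid whose unit space G⁽⁰⁾ is a Baire space. Then the interior of the isotropy bundle G' = {γ ∈ G : r(γ) = s(γ)} equals G⁽⁰⁾ if and only if the set of units x ∈ G⁽⁰⁾ with trivial isotropy group is dense in G⁽⁰⁾. -/
/-- A (Hausdorff-agnostic) étale topological groupoid, presented with total
source/range/inverse maps `G → G` (units are the common fixed points) and a
globally defined multiplication whose groupoid axioms are required only on
composable pairs.  The étale condition is expressed by: `src` is a continuous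
open map which is locally injective, and the unit space is open. -/
structure EtaleGroupoid (G : Type*) [TopologicalSpace G] where
  src : G → G
  rng : G → G
  inv : G → G
  mul : G → G → G
  src_src : ∀ γ, src (src γ) = src γ
  rng_src : ∀ γ, rng (src γ) = src γ
  src_rng : ∀ γ, src (rng γ) = rng γ
  rng_rng : ∀ γ, rng (rng γ) = rng γ
  src_inv : ∀ γ, src (inv γ) = rng γ
  rng_inv : ∀ γ, rng (inv γ) = src γ
  inv_inv : ∀ γ, inv (inv γ) = γ
  src_mul : ∀ γ δ, src γ = rng δ → src (mul γ δ) = src δ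
  rng_mul : ∀ γ δ, src γ = rng δ → rng (mul γ δ) = rng γ
  mul_assoc' : ∀ γ δ ε, src γ = rng δ → src δ = rng ε →
    mul (mul γ δ) ε = mul γ (mul δ ε)
  mul_src : ∀ γ, mul γ (src γ) = γ
  rng_mul_self : ∀ γ, mul (rng γ) γ = γ
  inv_mul : ∀ γ, mul (inv γ) γ = src γ
  mul_inv : ∀ γ, mul γ (inv γ) = rng γ
  continuous_src : Continuous src
  continuous_rng : Continuous rng
  continuous_inv : Continuous inv
  continuous_mul : Continuous fun p : {p : G × G // src p.1 = rng p.2} => mul p.1.1 p.1.2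
  isOpenMap_src : IsOpenMap src
  locallyInjOn_src : ∀ γ : G, ∃ U : Set G, IsOpen U ∧ γ ∈ U ∧ Set.InjOn src U
  isOpen_units : IsOpen {γ : G | src γ = γ}

namespace EtaleGroupoid

variable {G : Type*} [TopologicalSpace G] (gr : EtaleGroupoid G)

/-- The unit space `G⁽⁰⁾`. -/
def units : Set G := {γ : G | gr.src γ = γ}

/-- The isotropy bundle `G' = {γ : r γ = s γ}`. -/
def isotropy : Set G := {γ : G | gr.rng γ = gr.src γ}

/-- A bisection: a set on which both the range and the source map are injective. -/
def IsBisection (S : Set G) : Prop := Set.InjOn gr.rng S ∧ Set.InjOn gr.src S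

end EtaleGroupoid

/-- For a second countable Hausdorff étale groupoid whose unit
space is a Baire space, the interior of the isotropy bundle equals the unit
space iff units with trivial isotropy are dense in the unit space. -/
theorem stmt0 {G : Type*} [TopologicalSpace G] [T2Space G] [SecondCountableTopology G]
    (gr : EtaleGroupoid G) [BaireSpace ↥gr.units] :
    interior gr.isotropy = gr.units ↔
      gr.units ⊆ closure {x : G | x ∈ gr.units ∧
        ∀ γ : G, gr.rng γ = x → gr.src γ = x → γ = x} := by

  classical
  set T : Set G := {x : G | x ∈ gr.units ∧
    ∀ γ : G, gr.rng γ = x → gr.src γ = x → γ = x} with hT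
  have hunits_closed : IsClosed gr.units :=
    isClosed_eq gr.continuous_src continuous_id
  have hunits_open : IsOpen gr.units := gr.isOpen_units
  have hiso_closed : IsClosed gr.isotropy :=
    isClosed_eq gr.continuous_rng gr.continuous_src
  have hsub : gr.units ⊆ gr.isotropy := by
    intro u hu
    show gr.rng u = gr.src u
    conv_lhs => rw [← hu]
    rw [gr.rng_src, hu]
  have hsrc_unit : ∀ γ : G, gr.src γ ∈ gr.units := fun γ => gr.src_src γ
  constructor
  · -- forward direction: Baire category argument
    intro hint
    set P : Set G := gr.unitsᶜ with hPdef
    have hPopen : IsOpen P := hunits_closed.isOpen_compl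
    have hchoose : ∀ γ : ↥P, ∃ V : Set G,
        IsOpen V ∧ (γ : G) ∈ V ∧ Set.InjOn gr.src V ∧ V ⊆ P := by
      intro γ
      obtain ⟨U, hUo, hγU, hinj⟩ := gr.locallyInjOn_src (γ : G)
      exact ⟨U ∩ P, hUo.inter hPopen, ⟨hγU, γ.2⟩,
        hinj.mono Set.inter_subset_left, Set.inter_subset_right⟩
    choose V hVo hmemV hVinj hVP using hchoose
    obtain ⟨t, htc, htU⟩ := TopologicalSpace.isOpen_iUnion_countable V hVo
    have hcover : P ⊆ ⋃ i ∈ t, V i := by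
      rw [htU]
      intro γ hγ
      exact Set.mem_iUnion.mpr ⟨⟨γ, hγ⟩, hmemV _⟩
    -- For each i, the pullback of Y i to the unit space is nowhere dense.
    have key : ∀ i : ↥P, Dense ((closure
        ((Subtype.val : ↥gr.units → G) ⁻¹'
          (gr.src '' (V i ∩ gr.isotropy))))ᶜ) := by
      intro i
      set Y : Set G := gr.src '' (V i ∩ gr.isotropy) with hYdef
      rw [← interior_eq_empty_iff_dense_compl]
      by_contra hne
      obtain ⟨z, hz⟩ := Set.nonempty_iff_ne_empty.mpr hne
      obtain ⟨O, hOsub, hOopen, hzO⟩ := mem_interior.mp hz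
      set W' : Set G := (Subtype.val : ↥gr.units → G) '' O with hW'def
      have hW'o : IsOpen W' := hunits_open.isOpenMap_subtype_val O hOopen
      have hW'cl : ∀ w ∈ W', w ∈ closure Y := by
        rintro w ⟨w', hw', rfl⟩
        have h1 : w' ∈ closure ((Subtype.val : ↥gr.units → G) ⁻¹' Y) := hOsub hw'
        have h2 : (w' : G) ∈ closure
            ((Subtype.val : ↥gr.units → G) '' ((Subtype.val : ↥gr.units → G) ⁻¹' Y)) :=
          closure_subtype.mp h1
        exact closure_mono (Set.image_preimage_subset _ _) h2
      have hzW' : (z : G) ∈ W' := ⟨z, hzO, rfl⟩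
      have hzY : (z : G) ∈ closure Y := hW'cl _ hzW'
      obtain ⟨y, hyW', hyY⟩ := mem_closure_iff.mp hzY W' hW'o hzW'
      obtain ⟨γ₀, hγ₀, hγ₀y⟩ := hyY
      set M : Set G := V i ∩ gr.src ⁻¹' W' with hMdef
      have hMopen : IsOpen M := (hVo i).inter (hW'o.preimage gr.continuous_src)
      have hMiso : M ⊆ gr.isotropy := by
        intro γ hγ
        have hγcl : gr.src γ ∈ closure Y := hW'cl _ hγ.2
        have hcl : γ ∈ closure gr.isotropy := by
          rw [mem_closure_iff]
          intro N hN hγN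
          have hopen : IsOpen (gr.src '' (N ∩ V i)) :=
            gr.isOpenMap_src _ (hN.inter (hVo i))
          obtain ⟨y', hy'1, hy'2⟩ := mem_closure_iff.mp hγcl _ hopen
            ⟨γ, ⟨hγN, hγ.1⟩, rfl⟩
          obtain ⟨γ'', hγ'', hγ''y⟩ := hy'1
          obtain ⟨γ', hγ', hγ'y⟩ := hy'2
          have heq : γ'' = γ' := hVinj i hγ''.2 hγ'.1 (by rw [hγ''y, hγ'y])
          exact ⟨γ'', hγ''.1, heq ▸ hγ'.2⟩
        exact hiso_closed.closure_eq ▸ hcl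
      have hMunits : M ⊆ gr.units := by
        rw [← hint]
        exact interior_maximal hMiso hMopen
      have hγ₀M : γ₀ ∈ M := ⟨hγ₀.1, by
        (show gr.src γ₀ ∈ W'); rw [hγ₀y]; exact hyW'⟩
      exact (hVP i hγ₀.1) (hMunits hγ₀M)
    -- Baire: the countable intersection is dense in the unit space.
    have hdense : Dense (⋂ i ∈ t, (closure
        ((Subtype.val : ↥gr.units → G) ⁻¹'
          (gr.src '' (V i ∩ gr.isotropy))))ᶜ) :=
      dense_biInter_of_isOpen (fun i _ => (isClosed_closure).isOpen_compl) htc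
        (fun i _ => key i)
    have hsubS : (⋂ i ∈ t, (closure
        ((Subtype.val : ↥gr.units → G) ⁻¹'
          (gr.src '' (V i ∩ gr.isotropy))))ᶜ) ⊆
        ((Subtype.val : ↥gr.units → G) ⁻¹' T) := by
      intro x hx
      refine ⟨x.2, ?_⟩
      intro γ hrγ hsγ
      by_contra hne
      have hγP : γ ∈ P := by
        intro hγu
        exact hne (by rw [← hγu]; exact hsγ)
      obtain ⟨i, hi⟩ := Set.mem_iUnion.mp (hcover hγP)
      obtain ⟨it, hγV⟩ := Set.mem_iUnion.mp hi
      have hγiso : γ ∈ gr.isotropy := by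
        show gr.rng γ = gr.src γ
        rw [hrγ, hsγ]
      have hxY : x ∈ (Subtype.val : ↥gr.units → G) ⁻¹'
          (gr.src '' (V i ∩ gr.isotropy)) := ⟨γ, ⟨hγV, hγiso⟩, hsγ⟩
      have := Set.mem_iInter.mp (Set.mem_iInter.mp hx i) it
      exact this (subset_closure hxY)
    have hdenseS : Dense ((Subtype.val : ↥gr.units → G) ⁻¹' T) := hdense.mono hsubS
    intro x hx
    have hxc : (⟨x, hx⟩ : ↥gr.units) ∈
        closure ((Subtype.val : ↥gr.units → G) ⁻¹' T) := hdenseS _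
    have := closure_subtype.mp hxc
    exact closure_mono (Set.image_preimage_subset _ _) this
  · -- backward direction
    intro hdense
    apply Set.Subset.antisymm
    · intro γ hγ
      have hγcl : γ ∈ closure gr.units := by
        rw [mem_closure_iff]
        intro O hO hγO
        obtain ⟨U₀, hU₀o, hγU₀, hinj⟩ := gr.locallyInjOn_src γ
        set U : Set G := O ∩ U₀ ∩ interior gr.isotropy with hUdef
        have hUo : IsOpen U := (hO.inter hU₀o).inter isOpen_interior
        have hγU : γ ∈ U := ⟨⟨hγO, hγU₀⟩, hγ⟩
        have hsγ : gr.src γ ∈ closure T := hdense (hsrc_unit γ)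
        obtain ⟨y, hyU, hyT⟩ := mem_closure_iff.mp hsγ (gr.src '' U)
          (gr.isOpenMap_src U hUo) ⟨γ, hγU, rfl⟩
        obtain ⟨δ, hδU, hδy⟩ := hyU
        have hδiso : δ ∈ gr.isotropy := interior_subset hδU.2
        have hδiso' : gr.rng δ = gr.src δ := hδiso
        have hδeq : δ = y := hyT.2 δ (by rw [← hδy]; exact hδiso') hδy
        exact ⟨δ, hδU.1.1, by rw [hδeq]; exact hyT.1⟩
      exact hunits_closed.closure_eq ▸ hγcl
    · exact hunits_open.subset_interior_iff.mpr hsub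
end

section
/- Let G be a Hausdorff étale groupoid and let U be an open subset of G contained in the isotropy bundle G'. If every open subset of G⁽⁰⁾ consisting of units with nontrivial isotropy is empty (i.e., units with trivial isotropy are dense), then U is contained in G⁽⁰⁾. -/
/-- In a Hausdorff étale groupoid, if every open set of units
with nontrivial isotropy is empty, then any open set contained in the isotropy
bundle is contained in the unit space. -/
theorem stmt1 {G : Type*} [TopologicalSpace G] [T2Space G]
    (gr : EtaleGroupoid G) (U : Set G) (hU : IsOpen U) (hUiso : U ⊆ gr.isotropy)
    (h : ∀ V : Set G, IsOpen V →
      V ⊆ {x : G | x ∈ gr.units ∧ ∃ γ : G, gr.rng γ = x ∧ gr.src γ = x ∧ γ ≠ x} →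
      V = ∅) :
    U ⊆ gr.units := by
  intro γ hγ
  by_contra hne
  have hclosed : IsClosed gr.units := isClosed_eq gr.continuous_src continuous_id
  set O : Set G := U ∩ gr.unitsᶜ with hO
  have hOopen : IsOpen O := hU.inter hclosed.isOpen_compl
  have hγO : γ ∈ O := ⟨hγ, hne⟩
  have hVopen : IsOpen (gr.src '' O) := gr.isOpenMap_src O hOopen
  have hsub : gr.src '' O ⊆
      {x : G | x ∈ gr.units ∧ ∃ δ : G, gr.rng δ = x ∧ gr.src δ = x ∧ δ ≠ x} := by
    rintro x ⟨δ, ⟨hδU, hδn⟩, rfl⟩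
    refine ⟨gr.src_src δ, δ, ?_, rfl, ?_⟩
    · have := hUiso hδU
      simpa [EtaleGroupoid.isotropy] using this
    · intro hcontra
      exact hδn hcontra.symm
  have := h _ hVopen hsub
  exact absurd (this ▸ ⟨γ, hγO, rfl⟩ : gr.src γ ∈ (∅ : Set G)) (Set.notMem_empty _)
end

section
/- Let G be an étale groupoid over X = G⁽⁰⁾ and let α be the canonical action sending each open bisection S to the partial homeomorphism α_S : s(S) → r(S), α_S(x) = r(Sx). Then α is injective on the inverse semigroup of open bisections if and only if G is essentially principal (the interior of the isotropy bundle G' equals G⁽⁰⁾). -/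
lemma stmt3_key {G : Type*} [TopologicalSpace G] (gr : EtaleGroupoid G)
    (hiso : interior gr.isotropy = gr.units)
    (S T : Set G) (hS : IsOpen S) (hT : IsOpen T)
    (hst : gr.src '' S ⊆ gr.src '' T)
    (hact : ∀ γ ∈ S, ∀ δ ∈ T, gr.src γ = gr.src δ → gr.rng γ = gr.rng δ) :
    S ⊆ T := by
  intro γ hγ
  obtain ⟨δ, hδ, hsrc⟩ := hst ⟨γ, hγ, rfl⟩
  -- hsrc : gr.src δ = gr.src γ
  have hrng : gr.rng γ = gr.rng δ := hact γ hγ δ hδ hsrc.symm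
  have hcomp : gr.src (gr.inv δ) = gr.rng γ := by rw [gr.src_inv, hrng]
  set ε := gr.mul (gr.inv δ) γ with hεdef
  obtain ⟨U, hUopen, hεU, hUinj⟩ := gr.locallyInjOn_src ε
  -- get open boxes around (inv δ, γ) mapped into U by mul
  have hM : IsOpen ((fun p : {p : G × G // gr.src p.1 = gr.rng p.2} =>
      gr.mul p.1.1 p.1.2) ⁻¹' U) := hUopen.preimage gr.continuous_mul
  obtain ⟨W, hWopen, hWeq⟩ := isOpen_induced_iff.mp hM
  have hmemW : ((gr.inv δ, γ) : G × G) ∈ W := by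
    have : (⟨(gr.inv δ, γ), hcomp⟩ : {p : G × G // gr.src p.1 = gr.rng p.2}) ∈
        Subtype.val ⁻¹' W := by
      rw [hWeq]; exact hεU
    exact this
  obtain ⟨A, B, hAopen, hBopen, hA, hB, hABW⟩ := isOpen_prod_iff.mp hWopen _ _ hmemW
  set V : Set G := gr.src '' (S ∩ B) ∩ gr.src '' (T ∩ gr.inv ⁻¹' A) with hVdef
  have hVopen : IsOpen V :=
    (gr.isOpenMap_src _ (hS.inter hBopen)).inter
      (gr.isOpenMap_src _ (hT.inter (hAopen.preimage gr.continuous_inv)))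
  have hsrcε : gr.src ε = gr.src γ := gr.src_mul _ _ hcomp
  have hεV : gr.src ε ∈ V := by
    rw [hsrcε]
    exact ⟨⟨γ, ⟨hγ, hB⟩, rfl⟩, ⟨δ, ⟨hδ, hA⟩, hsrc⟩⟩
  have hOsub : U ∩ gr.src ⁻¹' V ⊆ gr.isotropy := by
    rintro u ⟨huU, huV⟩
    obtain ⟨⟨γ', ⟨hγ'S, hγ'B⟩, hγ'src⟩, ⟨δ', ⟨hδ'T, hδ'A⟩, hδ'src⟩⟩ := huV
    have hsrc' : gr.src γ' = gr.src δ' := hγ'src.trans hδ'src.symm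
    have hcomp' : gr.src (gr.inv δ') = gr.rng γ' := by
      rw [gr.src_inv, hact γ' hγ'S δ' hδ'T hsrc']
    have hwU : gr.mul (gr.inv δ') γ' ∈ U := by
      have : (⟨(gr.inv δ', γ'), hcomp'⟩ : {p : G × G // gr.src p.1 = gr.rng p.2}) ∈
          Subtype.val ⁻¹' W := hABW (Set.mk_mem_prod hδ'A hγ'B)
      rw [hWeq] at this
      exact this
    have huw : u = gr.mul (gr.inv δ') γ' := by
      apply hUinj huU hwU
      rw [gr.src_mul _ _ hcomp', hγ'src]
    show gr.rng u = gr.src u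
    rw [huw, gr.rng_mul _ _ hcomp', gr.rng_inv, gr.src_mul _ _ hcomp', hsrc']
  have hεint : ε ∈ interior gr.isotropy :=
    mem_interior.mpr ⟨U ∩ gr.src ⁻¹' V, hOsub,
      hUopen.inter (hVopen.preimage gr.continuous_src), hεU, hεV⟩
  rw [hiso] at hεint
  -- hεint : gr.src ε = ε
  have hεunit : gr.src ε = ε := hεint
  have hεval : ε = gr.src δ := by rw [← hεunit, hsrcε, hsrc]
  have : δ = γ := by
    calc δ = gr.mul δ (gr.src δ) := (gr.mul_src δ).symm
      _ = gr.mul δ (gr.mul (gr.inv δ) γ) := by rw [← hεval]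
      _ = gr.mul (gr.mul δ (gr.inv δ)) γ :=
        (gr.mul_assoc' δ (gr.inv δ) γ (gr.rng_inv δ).symm hcomp).symm
      _ = gr.mul (gr.rng δ) γ := by rw [gr.mul_inv]
      _ = gr.mul (gr.rng γ) γ := by rw [hrng]
      _ = γ := gr.rng_mul_self γ
  rwa [this] at hδ


/-- The canonical action `S ↦ α_S` of the inverse semigroup of
open bisections on the unit space (where `α_S(s γ) = r γ` for `γ ∈ S`) is
injective iff the groupoid is essentially principal. -/
theorem stmt3 {G : Type*} [TopologicalSpace G] (gr : EtaleGroupoid G) :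
    (∀ S T : Set G, IsOpen S → gr.IsBisection S → IsOpen T → gr.IsBisection T →
      gr.src '' S = gr.src '' T →
      (∀ γ ∈ S, ∀ δ ∈ T, gr.src γ = gr.src δ → gr.rng γ = gr.rng δ) →
      S = T) ↔
    interior gr.isotropy = gr.units := by

  constructor
  · -- injectivity of the action implies essentially principal
    intro h
    apply Set.Subset.antisymm
    · intro e he
      obtain ⟨N, hNopen, heN, hNinj⟩ := gr.locallyInjOn_src e
      set U : Set G := N ∩ interior gr.isotropy with hUdef
      have hUopen : IsOpen U := hNopen.inter isOpen_interior
      have hUiso : U ⊆ gr.isotropy := fun a ha => interior_subset ha.2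
      have heU : e ∈ U := ⟨heN, he⟩
      have hUsrcinj : Set.InjOn gr.src U := hNinj.mono Set.inter_subset_left
      have hUbis : gr.IsBisection U := by
        constructor
        · intro a ha b hb hab
          exact hUsrcinj ha hb (by rw [← hUiso ha, ← hUiso hb, hab])
        · exact hUsrcinj
      set T : Set G := gr.src '' U with hTdef
      have hTopen : IsOpen T := gr.isOpenMap_src U hUopen
      have hTfix : ∀ t ∈ T, gr.src t = t ∧ gr.rng t = t := by
        rintro t ⟨a, _, rfl⟩
        exact ⟨gr.src_src a, gr.rng_src a⟩
      have hTbis : gr.IsBisection T := by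
        constructor
        · intro a ha b hb hab
          rw [← (hTfix a ha).2, ← (hTfix b hb).2, hab]
        · intro a ha b hb hab
          rw [← (hTfix a ha).1, ← (hTfix b hb).1, hab]
      have himg : gr.src '' U = gr.src '' T := by
        rw [hTdef, Set.image_image]
        exact (Set.image_congr fun a _ => gr.src_src a).symm
      have hact : ∀ γ ∈ U, ∀ δ ∈ T, gr.src γ = gr.src δ → gr.rng γ = gr.rng δ := by
        intro γ hγ δ hδ hs
        have hδfix := hTfix δ hδ
        rw [hδfix.2, ← hδfix.1, ← hs]
        exact hUiso hγ
      have hUT : U = T := h U T hUopen hUbis hTopen hTbis himg hact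
      have heT : e ∈ T := hUT ▸ heU
      exact (hTfix e heT).1
    · intro u hu
      have hu' : gr.src u = u := hu
      have hsub : gr.units ⊆ gr.isotropy := by
        intro a ha
        have h1 := gr.rng_src a
        have ha' : gr.src a = a := ha
        rw [ha'] at h1
        show gr.rng a = gr.src a
        rw [h1, ha']
      exact interior_maximal hsub gr.isOpen_units hu
  · -- essentially principal implies injectivity
    intro hiso S T hSopen _ hTopen _ himg hact
    apply Set.Subset.antisymm
    · exact stmt3_key gr hiso S T hSopen hTopen himg.le hact
    · refine stmt3_key gr hiso T S hTopen hSopen himg.ge ?_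
      intro δ hδ γ hγ hs
      exact (hact γ hγ δ hδ hs.symm).symm
end

section
/- Let B be an abelian C*-subalgebra of a C*-algebra A containing an approximate unit of A, and let n ∈ N(B). If n*bn = b n*n for all b ∈ B, then n commutes with every element of B. -/
open Filter in
/-- `e : ι → A` (along the filter `l`) is an approximate unit of `A` contained
in the C*-subalgebra `B`. -/
def IsApproxUnitIn {A : Type*} [NormedRing A] [StarRing A] [PartialOrder A]
    [NormedAlgebra ℂ A] [StarModule ℂ A] (B : StarSubalgebra ℂ A)
    {ι : Type*} (l : Filter ι) (e : ι → A) : Prop :=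
  l.NeBot ∧ (∀ i, e i ∈ B) ∧ (∀ i, 0 ≤ e i) ∧ (∀ i, ‖e i‖ ≤ 1) ∧
    ∀ a : A, Tendsto (fun i => e i * a) l (nhds a) ∧
      Tendsto (fun i => a * e i) l (nhds a)

/-- The normalizer `N(B) = {n : n B n* ⊆ B and n* B n ⊆ B}` of a subalgebra. -/
def starNormalizer {A : Type*} [NormedRing A] [StarRing A] [NormedAlgebra ℂ A]
    [StarModule ℂ A] (B : StarSubalgebra ℂ A) : Set A :=
  {n : A | ∀ b ∈ B, n * b * star n ∈ B ∧ star n * b * n ∈ B}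

/-- Let `B` be an abelian C*-subalgebra containing an
approximate unit of `A` and `n ∈ N(B)`. If `n* b n = b (n* n)` for all `b ∈ B`,
then `n` commutes with every element of `B`. -/
theorem stmt7 {A : Type*} [NormedRing A] [StarRing A] [CStarRing A]
    [NormedAlgebra ℂ A] [StarModule ℂ A] [CompleteSpace A]
    [PartialOrder A] [StarOrderedRing A]
    (B : StarSubalgebra ℂ A) (hBclosed : IsClosed (B : Set A))
    (hBcomm : ∀ b ∈ B, ∀ b' ∈ B, b * b' = b' * b)
    {ι : Type*} (l : Filter ι) (e : ι → A) (he : IsApproxUnitIn B l e)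
    (n : A) (hn : n ∈ starNormalizer B)
    (h : ∀ b ∈ B, star n * b * n = b * (star n * n)) :
    ∀ b ∈ B, n * b = b * n := by
  intro b hb
  have e1 := h b hb
  have e2 := h (star b) (star_mem hb)
  have e3 := h (star b * b) (mul_mem (star_mem hb) hb)
  have key : star (n * b - b * n) * (n * b - b * n) = 0 := by
    simp only [star_sub, star_mul]
    have expand : (star b * star n - star n * star b) * (n * b - b * n)
        = star b * (star n * b * n) * 0 + (star b * (star n * n) * b
          - star b * (star n * b * n) - (star n * star b * n) * b
          + star n * (star b * b) * n) := by noncomm_ring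
    rw [expand, e1, e2, e3]
    noncomm_ring
  exact sub_eq_zero.mp (CStarRing.star_mul_self_eq_zero_iff _ |>.mp key)
end

section
/- Let B be an abelian C*-subalgebra of a C*-algebra A containing an approximate unit of A. If B is maximal abelian in A, then every n ∈ N(B) that commutes with all elements of B belongs to B; conversely, if B is regular (the normalizer N(B) generates A as a C*-algebra) and every element of N(B) commuting with B lies in B, then B is maximal abelian in A. -/
open NormedSpace ComplexStarModule
open Complex (I conj_I)

/-! A self-adjoint `c` commuting with `B` generates the unitaries
`exp (t • I • c)`, which commute with `B` and are therefore normalizers of `B`, hence lie in `B`;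
as `B` is closed, it contains their derivative `I • c` at `t = 0`. An arbitrary element commuting
with `B` is handled through its real and imaginary parts. -/

section Normalizer

variable {A : Type*} [NormedRing A] [StarRing A] [NormedAlgebra ℂ A] [StarModule ℂ A]
  (B : StarSubalgebra ℂ A)

theorem unitary_mem_starNormalizer {u : A} (hu : u ∈ unitary A)
    (hcomm : ∀ b ∈ B, Commute u b) : u ∈ starNormalizer B := by
  intro b hb
  have hstar : Commute (star u) b := commute_star_comm.mpr (hcomm _ (star_mem hb))
  constructor
  · rwa [(hcomm b hb).eq, mul_assoc, Unitary.mul_star_self_of_mem hu, mul_one]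
  · rwa [hstar.eq, mul_assoc, Unitary.star_mul_self_of_mem hu, mul_one]

variable [CompleteSpace A] {B}

theorem mem_of_forall_exp_smul_mem (hB : IsClosed (B : Set A)) {x : A}
    (h : ∀ t : ℝ, exp (t • x) ∈ B) : x ∈ B := by
  have hd : HasDerivAt (fun t : ℝ => exp (t • x)) x 0 := by
    simpa using hasDerivAt_exp_smul_const (𝕂 := ℝ) x 0
  refine hB.mem_of_tendsto (hasDerivAt_iff_tendsto_slope.mp hd) (.of_forall fun t => ?_)
  rw [slope_def_module, ← Complex.coe_smul]
  exact B.smul_mem (sub_mem (h t) (h 0)) _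

variable [ContinuousStar A]

theorem IsSelfAdjoint.mem_of_forall_commute (hB : IsClosed (B : Set A))
    (hN : ∀ n ∈ starNormalizer B, (∀ b ∈ B, Commute n b) → n ∈ B)
    {c : A} (hc : IsSelfAdjoint c) (hcomm : ∀ b ∈ B, Commute c b) : c ∈ B := by
  let +nondep : NormedAlgebra ℚ A := .restrictScalars ℚ ℂ A
  have hexp_comm (t : ℝ) (b : A) (hb : b ∈ B) : Commute (NormedSpace.exp (t • I • c)) b :=
    (((hcomm b hb).smul_left I).smul_left t).exp_left
  have hexp_unitary (t : ℝ) : NormedSpace.exp (t • I • c) ∈ unitary A := by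
    refine exp_mem_unitary_of_mem_skewAdjoint ?_
    rw [smul_comm]
    exact ((IsSelfAdjoint.all t).smul hc).smul_mem_skewAdjoint conj_I
  have hIc : I • c ∈ B := mem_of_forall_exp_smul_mem hB fun t =>
    hN _ (unitary_mem_starNormalizer B (hexp_unitary t) (hexp_comm t)) (hexp_comm t)
  simpa [smul_smul] using B.smul_mem hIc (-I)

theorem mem_of_forall_commute_of_starNormalizer (hB : IsClosed (B : Set A))
    (hN : ∀ n ∈ starNormalizer B, (∀ b ∈ B, Commute n b) → n ∈ B)
    {a : A} (ha : ∀ b ∈ B, Commute a b) : a ∈ B := by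
  have hstar (b : A) (hb : b ∈ B) : Commute (star a) b :=
    commute_star_comm.mpr (ha _ (star_mem hb))
  have hre : (ℜ a : A) ∈ B := (ℜ a).prop.mem_of_forall_commute hB hN fun b hb => by
    rw [realPart_apply_coe]
    exact ((ha b hb).add_left (hstar b hb)).smul_left _
  have him : (ℑ a : A) ∈ B := (ℑ a).prop.mem_of_forall_commute hB hN fun b hb => by
    rw [imaginaryPart_apply_coe]
    exact (((ha b hb).sub_left (hstar b hb)).smul_left _).smul_left _
  rw [← realPart_add_I_smul_imaginaryPart a]
  exact add_mem hre (B.smul_mem him I)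

end Normalizer

theorem stmt8_general {A : Type*} [NormedRing A] [StarRing A] [CStarRing A]
    [NormedAlgebra ℂ A] [StarModule ℂ A] [CompleteSpace A]
    (B : StarSubalgebra ℂ A) (hBclosed : IsClosed (B : Set A)) :
    ((∀ a : A, (∀ b ∈ B, a * b = b * a) → a ∈ B) →
      ∀ n ∈ starNormalizer B, (∀ b ∈ B, n * b = b * n) → n ∈ B) ∧
    (((StarAlgebra.adjoin ℂ (starNormalizer B)).topologicalClosure = ⊤ ∧
        ∀ n ∈ starNormalizer B, (∀ b ∈ B, n * b = b * n) → n ∈ B) →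
      ∀ a : A, (∀ b ∈ B, a * b = b * a) → a ∈ B) :=
  ⟨fun h n _ hn => h n hn,
    fun ⟨_, hN⟩ _ ha => mem_of_forall_commute_of_starNormalizer hBclosed hN ha⟩

/-- Let `B` be an abelian C*-subalgebra containing an
approximate unit of `A`.  If `B` is maximal abelian then every normalizer
commuting with `B` lies in `B`; conversely if `B` is regular (the C*-algebra
generated by `N(B)` is all of `A`) and every normalizer commuting with `B`
lies in `B`, then `B` is maximal abelian. -/
theorem stmt8 {A : Type*} [NormedRing A] [StarRing A] [CStarRing A]
    [NormedAlgebra ℂ A] [StarModule ℂ A] [CompleteSpace A]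
    [PartialOrder A] [StarOrderedRing A]
    (B : StarSubalgebra ℂ A) (hBclosed : IsClosed (B : Set A))
    (hBcomm : ∀ b ∈ B, ∀ b' ∈ B, b * b' = b' * b)
    {ι : Type*} (l : Filter ι) (e : ι → A) (he : IsApproxUnitIn B l e) :
    ((∀ a : A, (∀ b ∈ B, a * b = b * a) → a ∈ B) →
      ∀ n ∈ starNormalizer B, (∀ b ∈ B, n * b = b * n) → n ∈ B) ∧
    (((StarAlgebra.adjoin ℂ (starNormalizer B)).topologicalClosure = ⊤ ∧
        ∀ n ∈ starNormalizer B, (∀ b ∈ B, n * b = b * n) → n ∈ B) →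
      ∀ a : A, (∀ b ∈ B, a * b = b * a) → a ∈ B) :=
  stmt8_general B hBclosed
end

section
/- Let G be a Hausdorff étale groupoid, C_c(G) its convolution *-algebra with product f*g(γ) = Σ_{αβ=γ} f(α)g(β) and involution f*(γ) = conj(f(γ⁻¹)). An element a of the reduced groupoid C*-algebra C*_r(G), viewed as a continuous function on G, commutes with every element of C₀(G⁽⁰⁾) if and only if its open support {γ : a(γ) ≠ 0} is contained in the isotropy bundle G'. -/
/-- A realization of the reduced C*-algebra `C*_r(G)` of an étale groupoid:
a C*-algebra `A` whose elements are faithfully represented as continuous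
functions on `G`, with convolution product, the usual involution, and
containing (the extensions by zero of) all of `C₀(G⁽⁰⁾)`. -/
structure ReducedRep (G : Type*) [TopologicalSpace G] (gr : EtaleGroupoid G)
    (A : Type*) [NormedRing A] [StarRing A] [NormedAlgebra ℂ A] where
  j : A →ₗ[ℂ] (G → ℂ)
  j_injective : Function.Injective j
  j_continuous : ∀ a : A, Continuous (j a)
  j_star : ∀ (a : A) (γ : G), j (star a) γ = starRingEnd ℂ (j a (gr.inv γ))
  j_mul : ∀ (a b : A) (γ : G),
    j (a * b) γ = ∑' δ : {δ : G // gr.src δ = gr.src γ},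
      j a (gr.mul γ (gr.inv δ.1)) * j b δ.1
  exists_c0 : ∀ h : G → ℂ, Continuous h → (∀ γ ∉ gr.units, h γ = 0) →
    (∀ ε : ℝ, 0 < ε → ∃ K : Set G, IsCompact K ∧ ∀ γ ∉ K, ‖h γ‖ < ε) →
    ∃ a : A, j a = h

/-- The canonical copy of `C₀(G⁽⁰⁾)` inside `C*_r(G)`: the elements whose open
support is contained in the unit space. -/
def unitSubalg {G : Type*} [TopologicalSpace G] {gr : EtaleGroupoid G}
    {A : Type*} [NormedRing A] [StarRing A] [NormedAlgebra ℂ A]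
    (R : ReducedRep G gr A) : Set A :=
  {a : A | ∀ γ ∉ gr.units, R.j a γ = 0}

section Aux

variable {G : Type*} [TopologicalSpace G] (gr : EtaleGroupoid G)

/-- The inverse of a unit is itself. -/
lemma inv_unit_aux {u : G} (hu : gr.src u = u) : gr.inv u = u := by
  have hr : gr.rng u = u := by
    conv_lhs => rw [← hu]
    rw [gr.rng_src, hu]
  calc gr.inv u = gr.mul (gr.inv u) (gr.src (gr.inv u)) := (gr.mul_src _).symm
    _ = gr.mul (gr.inv u) u := by rw [gr.src_inv, hr]
    _ = gr.src u := gr.inv_mul u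
    _ = u := hu

/-- If `γ δ⁻¹` is a unit and `src δ = src γ` then `δ = γ`. -/
lemma cancel_aux {γ δ : G} (hs : gr.src δ = gr.src γ)
    (hu : gr.src (gr.mul γ (gr.inv δ)) = gr.mul γ (gr.inv δ)) : δ = γ := by
  have hcomp : gr.src γ = gr.rng (gr.inv δ) := by rw [gr.rng_inv, hs]
  have hsrc : gr.src (gr.mul γ (gr.inv δ)) = gr.rng δ := by
    rw [gr.src_mul _ _ hcomp, gr.src_inv]
  have key : gr.mul γ (gr.inv δ) = gr.rng δ := by rw [← hu, hsrc]
  calc δ = gr.mul (gr.rng δ) δ := (gr.rng_mul_self δ).symm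
    _ = gr.mul (gr.mul γ (gr.inv δ)) δ := by rw [key]
    _ = gr.mul γ (gr.mul (gr.inv δ) δ) := gr.mul_assoc' _ _ _ hcomp (by rw [gr.src_inv])
    _ = gr.mul γ (gr.src δ) := by rw [gr.inv_mul]
    _ = gr.mul γ (gr.src γ) := by rw [hs]
    _ = γ := gr.mul_src γ

variable {A : Type*} [NormedRing A] [StarRing A] [NormedAlgebra ℂ A]
  (R : ReducedRep G gr A)

lemma j_mul_right {a b : A} (hb : ∀ γ ∉ gr.units, R.j b γ = 0) (γ : G) :
    R.j (a * b) γ = R.j a γ * R.j b (gr.src γ) := by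
  rw [R.j_mul]
  have h0 : (⟨gr.src γ, gr.src_src γ⟩ : {δ : G // gr.src δ = gr.src γ}) =
      (⟨gr.src γ, gr.src_src γ⟩ : {δ : G // gr.src δ = gr.src γ}) := rfl
  rw [tsum_eq_single (⟨gr.src γ, gr.src_src γ⟩ : {δ : G // gr.src δ = gr.src γ}) ?_]
  · simp only
    rw [inv_unit_aux gr (gr.src_src γ), gr.mul_src]
  · rintro ⟨δ, hδ⟩ hne
    have : R.j b δ = 0 := by
      by_contra hjb
      have hδu : gr.src δ = δ := by
        by_contra hnu
        exact hjb (hb δ hnu)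
      exact hne (Subtype.ext (hδu.symm.trans hδ))
    simp [this]

lemma j_mul_left {a b : A} (hb : ∀ γ ∉ gr.units, R.j b γ = 0) (γ : G) :
    R.j (b * a) γ = R.j b (gr.rng γ) * R.j a γ := by
  rw [R.j_mul]
  rw [tsum_eq_single (⟨γ, rfl⟩ : {δ : G // gr.src δ = gr.src γ}) ?_]
  · simp only
    rw [gr.mul_inv]
  · rintro ⟨δ, hδ⟩ hne
    have : R.j b (gr.mul γ (gr.inv δ)) = 0 := by
      by_contra hjb
      have hu : gr.src (gr.mul γ (gr.inv δ)) = gr.mul γ (gr.inv δ) := by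
        by_contra hnu
        exact hjb (hb _ hnu)
      exact hne (Subtype.ext (cancel_aux gr hδ hu))
    simp [this]

end Aux

/-- An element of `C*_r(G)` commutes with every element of
`C₀(G⁽⁰⁾)` iff its open support is contained in the isotropy bundle. -/
theorem stmt9 {G : Type*} [TopologicalSpace G] [T2Space G] [LocallyCompactSpace G]
    [SecondCountableTopology G] (gr : EtaleGroupoid G)
    {A : Type*} [NormedRing A] [StarRing A] [CStarRing A] [NormedAlgebra ℂ A]
    [StarModule ℂ A] [CompleteSpace A]
    (R : ReducedRep G gr A) (a : A) :
    (∀ h ∈ unitSubalg R, a * h = h * a) ↔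
    {γ : G | R.j a γ ≠ 0} ⊆ gr.isotropy := by
  constructor
  · intro hcomm γ hγ
    simp only [Set.mem_setOf_eq] at hγ
    by_contra hiso
    have hiso' : gr.rng γ ≠ gr.src γ := hiso
    -- build a bump function separating rng γ from src γ, supported in units
    have hrng_unit : gr.rng γ ∈ gr.units := gr.src_rng γ
    have hU : IsOpen (gr.units ∩ {gr.src γ}ᶜ : Set G) :=
      gr.isOpen_units.inter isClosed_singleton.isOpen_compl
    have hmem : gr.rng γ ∈ (gr.units ∩ {gr.src γ}ᶜ : Set G) :=
      ⟨hrng_unit, by simpa using hiso'⟩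
    obtain ⟨f, hf1, hf0, hfc, -⟩ := exists_continuous_one_zero_of_isCompact
      (isCompact_singleton (x := gr.rng γ)) hU.isClosed_compl
      (Set.disjoint_singleton_left.mpr (fun h => h hmem))
    set h : G → ℂ := fun x => (f x : ℂ) with hh
    have hsupp : ∀ x ∉ gr.units, h x = 0 := by
      intro x hx
      have : f x = 0 := hf0 (fun hx' => hx hx'.1)
      simp [hh, this]
    have hvanish : ∀ ε : ℝ, 0 < ε → ∃ K : Set G, IsCompact K ∧ ∀ x ∉ K, ‖h x‖ < ε := by
      intro ε hε
      refine ⟨tsupport f, hfc, fun x hx => ?_⟩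
      have : f x = 0 := image_eq_zero_of_notMem_tsupport hx
      simp [hh, this, hε]
    obtain ⟨b, hb⟩ := R.exists_c0 h (by continuity) hsupp hvanish
    · have hbmem : b ∈ unitSubalg R := by
        intro x hx; rw [hb]; exact hsupp x hx
      have := hcomm b hbmem
      have heq : R.j (a * b) γ = R.j (b * a) γ := by rw [this]
      rw [j_mul_right gr R hbmem, j_mul_left gr R hbmem, hb] at heq
      have hsγ : h (gr.src γ) = 0 := by
        have : f (gr.src γ) = 0 := hf0 (fun hx' => hx'.2 rfl)
        simp [hh, this]
      have hrγ : h (gr.rng γ) = 1 := by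
        have : f (gr.rng γ) = 1 := hf1 rfl
        simp [hh, this]
      rw [hsγ, hrγ, mul_zero, one_mul] at heq
      exact hγ heq.symm
  · intro hsupp b hb
    apply R.j_injective
    funext γ
    rw [j_mul_right gr R hb, j_mul_left gr R hb]
    by_cases ha : R.j a γ = 0
    · simp [ha]
    · have : gr.rng γ = gr.src γ := hsupp ha
      rw [this, mul_comm]
end

section
/- Let G be a Hausdorff locally compact second countable étale groupoid and let a ∈ C*_r(G) be such that its open support S = {γ : a(γ) ≠ 0} is a bisection of G. Then a belongs to the normalizer N(C₀(G⁽⁰⁾)) in C*_r(G), and for every b ∈ C₀(G⁽⁰⁾) and every unit x ∈ s(S), one has (a* b a)(x) = (a* a)(x) · b(α_S(x)), where α_S is the partial homeomorphism induced by S. -/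
/-!
Convolution at `γ` sums over the arrows `δ` with `s δ = s γ`. When the open support of `a` is a
bisection it meets each source fibre and each range fibre at most once, so every convolution
sum involving `a` has at most one nonzero term. This forces `a b a*` to vanish off the unit
space, and at `s γ` it reduces `(a* b a)(s γ)` to `conj (a γ) · b (r γ) · a γ`. The support of
`a*` is the inverse of that of `a`, again a bisection, so `a* b a = a* b (a*)*` is covered too.
-/

namespace EtaleGroupoid

variable {G : Type*} [TopologicalSpace G] (gr : EtaleGroupoid G)

lemma rng_eq_self_of_src_eq_self {u : G} (hu : gr.src u = u) : gr.rng u = u := by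
  simpa only [hu] using gr.rng_src u

lemma inv_eq_self_of_src_eq_self {u : G} (hu : gr.src u = u) : gr.inv u = u := by
  have h := gr.rng_mul_self (gr.inv u)
  rw [gr.rng_inv, hu] at h
  rw [← h, gr.mul_inv, gr.rng_eq_self_of_src_eq_self hu]

lemma src_mul_inv_self (γ : G) : gr.mul (gr.src γ) (gr.inv γ) = gr.inv γ := by
  simpa only [gr.rng_inv] using gr.rng_mul_self (gr.inv γ)

lemma mem_units_of_mul_inv_eq {γ δ : G} (hs : gr.src δ = gr.src γ)
    (h : gr.mul γ (gr.inv δ) = gr.inv δ) : γ ∈ gr.units := by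
  have assoc := gr.mul_assoc' γ (gr.inv δ) δ (by rw [gr.rng_inv, hs]) (gr.src_inv δ)
  rwa [h, gr.inv_mul, hs, gr.mul_src] at assoc

end EtaleGroupoid

namespace ReducedRep

variable {G : Type*} [TopologicalSpace G] {gr : EtaleGroupoid G}
  {A : Type*} [NormedRing A] [StarRing A] [NormedAlgebra ℂ A] (R : ReducedRep G gr A)

lemma j_mul_apply_eq_zero {a b : A} {γ : G}
    (h : ∀ δ, gr.src δ = gr.src γ → R.j a (gr.mul γ (gr.inv δ)) * R.j b δ = 0) :
    R.j (a * b) γ = 0 := by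
  rw [R.j_mul]
  exact (tsum_congr fun δ : {δ // gr.src δ = gr.src γ} => h δ.1 δ.2).trans tsum_zero

lemma j_mul_apply_eq_single {a b : A} {γ δ₀ : G} (hδ₀ : gr.src δ₀ = gr.src γ)
    (h : ∀ δ, gr.src δ = gr.src γ → δ ≠ δ₀ → R.j a (gr.mul γ (gr.inv δ)) * R.j b δ = 0) :
    R.j (a * b) γ = R.j a (gr.mul γ (gr.inv δ₀)) * R.j b δ₀ := by
  rw [R.j_mul, tsum_eq_single ⟨δ₀, hδ₀⟩ fun δ hne => h δ.1 δ.2 fun heq => hne (Subtype.ext heq)]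

lemma j_mul_apply_of_mem_unitSubalg (a : A) {b : A} (hb : b ∈ unitSubalg R) (γ : G) :
    R.j (a * b) γ = R.j a γ * R.j b (gr.src γ) := by
  rw [R.j_mul_apply_eq_single (gr.src_src γ), gr.inv_eq_self_of_src_eq_self (gr.src_src γ),
    gr.mul_src]
  intro δ hδ hne
  rw [hb δ fun hu => hne (hu.symm.trans hδ), mul_zero]

lemma j_mul_apply_src_of_injOn_src (c : A) {a : A}
    (hinj : Set.InjOn gr.src {γ | R.j a γ ≠ 0}) {γ : G} (hγ : R.j a γ ≠ 0) :
    R.j (c * a) (gr.src γ) = R.j c (gr.inv γ) * R.j a γ := by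
  rw [R.j_mul_apply_eq_single (gr.src_src γ).symm, gr.src_mul_inv_self]
  intro δ hδ hne
  by_contra hterm
  exact hne (hinj (right_ne_zero_of_mul hterm) hγ (hδ.trans (gr.src_src γ)))

lemma injOn_src_support_star {a : A} (hinj : Set.InjOn gr.rng {γ | R.j a γ ≠ 0}) :
    Set.InjOn gr.src {γ | R.j (star a) γ ≠ 0} := by
  intro γ hγ δ hδ hs
  simp only [Set.mem_ofPred_eq, R.j_star, map_ne_zero] at hγ hδ
  rw [← gr.inv_inv γ, ← gr.inv_inv δ, hinj hγ hδ (by rw [gr.rng_inv, gr.rng_inv, hs])]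

lemma mul_mul_star_mem_unitSubalg {a b : A} (hinj : Set.InjOn gr.src {γ | R.j a γ ≠ 0})
    (hb : b ∈ unitSubalg R) : a * b * star a ∈ unitSubalg R := by
  intro γ hγ
  refine R.j_mul_apply_eq_zero fun δ hδ => ?_
  rw [R.j_mul_apply_of_mem_unitSubalg a hb, R.j_star]
  by_contra hterm
  have hγδ : R.j a (gr.mul γ (gr.inv δ)) ≠ 0 :=
    left_ne_zero_of_mul (left_ne_zero_of_mul hterm)
  have hδ' : R.j a (gr.inv δ) ≠ 0 := fun h => right_ne_zero_of_mul hterm (by rw [h, map_zero])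
  have hsrc : gr.src (gr.mul γ (gr.inv δ)) = gr.src (gr.inv δ) :=
    gr.src_mul γ (gr.inv δ) (by rw [gr.rng_inv, hδ])
  exact hγ (gr.mem_units_of_mul_inv_eq hδ (hinj hγδ hδ' hsrc))

end ReducedRep

theorem stmt11_general {G : Type*} [TopologicalSpace G] (gr : EtaleGroupoid G)
    {A : Type*} [NormedRing A] [StarRing A] [NormedAlgebra ℂ A]
    (R : ReducedRep G gr A) (a : A)
    (hbis : gr.IsBisection {γ : G | R.j a γ ≠ 0}) :
    (∀ b ∈ unitSubalg R,
      a * b * star a ∈ unitSubalg R ∧ star a * b * a ∈ unitSubalg R) ∧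
    (∀ b ∈ unitSubalg R, ∀ γ : G, R.j a γ ≠ 0 →
      R.j (star a * b * a) (gr.src γ) =
        R.j (star a * a) (gr.src γ) * R.j b (gr.rng γ)) := by
  refine ⟨fun b hb => ⟨R.mul_mul_star_mem_unitSubalg hbis.2 hb, ?_⟩, fun b hb γ hγ => ?_⟩
  · simpa only [star_star] using
      R.mul_mul_star_mem_unitSubalg (R.injOn_src_support_star hbis.1) hb
  · rw [R.j_mul_apply_src_of_injOn_src _ hbis.2 hγ, R.j_mul_apply_src_of_injOn_src _ hbis.2 hγ,
      R.j_mul_apply_of_mem_unitSubalg _ hb, gr.src_inv]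
    ring

/-- If the open support of `a ∈ C*_r(G)` is a bisection `S`,
then `a` normalizes `C₀(G⁽⁰⁾)` and `(a* b a)(x) = (a* a)(x) · b(α_S x)` for
`b ∈ C₀(G⁽⁰⁾)` and `x ∈ s(S)` (with `x = s γ`, `α_S x = r γ` for `γ ∈ S`). -/
theorem stmt11 {G : Type*} [TopologicalSpace G] [T2Space G] [LocallyCompactSpace G]
    [SecondCountableTopology G] (gr : EtaleGroupoid G)
    {A : Type*} [NormedRing A] [StarRing A] [CStarRing A] [NormedAlgebra ℂ A]
    [StarModule ℂ A] [CompleteSpace A]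
    (R : ReducedRep G gr A) (a : A)
    (hbis : gr.IsBisection {γ : G | R.j a γ ≠ 0}) :
    (∀ b ∈ unitSubalg R,
      a * b * star a ∈ unitSubalg R ∧ star a * b * a ∈ unitSubalg R) ∧
    (∀ b ∈ unitSubalg R, ∀ γ : G, R.j a γ ≠ 0 →
      R.j (star a * b * a) (gr.src γ) =
        R.j (star a * a) (gr.src γ) * R.j b (gr.rng γ)) :=
  stmt11_general gr R a hbis
end

section
/- Let (A,B) be a pair where B is a maximal abelian C*-subalgebra of A containing an approximate unit of A, and let P : A → B be a conditional expectation. For n ∈ N(B) and a pure state x of B (viewed as a point of the Gelfand spectrum) lying in dom(n) = {x : x(n*n) > 0}, if the germ of the induced partial homeomorphism α_n at x is nontrivial (there is a sequence x_i → x in dom(n) with α_n(x_i) ≠ x_i), then P(n)(x) = 0. -/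
open scoped ComplexOrder

open scoped ComplexOrder in
lemma char_nonneg_aux {A : Type*} [NormedRing A] [StarRing A] [CStarRing A]
    [NormedAlgebra ℂ A] [StarModule ℂ A] [CompleteSpace A]
    [PartialOrder A] [StarOrderedRing A]
    (B : StarSubalgebra ℂ A) (hBclosed : IsClosed (B : Set A))
    (y : WeakDual.characterSpace ℂ ↥B) (c : ↥B) (hc : 0 ≤ (c : A)) :
    0 ≤ y c := by
  letI : CStarAlgebra A :=
    { toNormedRing := ‹_›, toStarRing := ‹_›, toCompleteSpace := ‹_›,
      toCStarRing := ‹_›, toNormedAlgebra := ‹_›, toStarModule := ‹_› }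
  haveI : IsClosed ((B : Set A)) := hBclosed
  have h1 : y c ∈ spectrum ℂ c := WeakDual.CharacterSpace.apply_mem_spectrum y c
  rw [StarSubalgebra.spectrum_eq B] at h1
  exact spectrum_nonneg_of_nonneg hc h1

open scoped ComplexOrder in
/-- If the conditional expectation of `star a * a` vanishes at the character `y`,
then so does that of `a`. -/
lemma char_P_vanish_aux {A : Type*} [NormedRing A] [StarRing A] [CStarRing A]
    [NormedAlgebra ℂ A] [StarModule ℂ A] [CompleteSpace A]
    [PartialOrder A] [StarOrderedRing A]
    (B : StarSubalgebra ℂ A) (hBclosed : IsClosed (B : Set A))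
    (P : A →ₗ[ℂ] A) (hPmem : ∀ a : A, P a ∈ B) (hPid : ∀ b ∈ B, P b = b)
    (hPpos : ∀ a : A, 0 ≤ a → 0 ≤ P a)
    (y : WeakDual.characterSpace ℂ ↥B) (a : A)
    (h3 : y ⟨P (star a * a), hPmem _⟩ = 0) :
    y ⟨P a, hPmem a⟩ = 0 := by
  set z : ℂ := y ⟨P a, hPmem a⟩ with hz
  set w : ℂ := y ⟨P (star a), hPmem _⟩ with hw
  have H : ∀ t : ℂ, (0:ℂ) ≤ 1 + (t * z + star t * w) := by
    intro t
    have hq : (0:A) ≤ star (1 + t • a) * (1 + t • a) := star_mul_self_nonneg _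
    have hexp : star (1 + t • a) * (1 + t • a)
        = 1 + (t • a + (star t • star a + (t * star t) • (star a * a))) := by
      simp only [star_add, star_one, star_smul, add_mul, mul_add, one_mul,
        mul_one, smul_mul_assoc, mul_smul_comm, smul_smul, smul_add]
      abel
    have hPexp : (⟨P (star (1 + t • a) * (1 + t • a)), hPmem _⟩ : ↥B)
        = 1 + (t • ⟨P a, hPmem a⟩ + (star t • ⟨P (star a), hPmem _⟩
            + (t * star t) • ⟨P (star a * a), hPmem _⟩)) := by
      apply Subtype.ext
      push_cast
      rw [hexp, map_add, map_add, map_add, map_smul, map_smul, map_smul,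
        hPid 1 (one_mem B)]
    have h0 := char_nonneg_aux B hBclosed y ⟨P _, hPmem _⟩ (hPpos _ hq)
    rw [hPexp] at h0
    rw [map_add, map_add, map_add, map_one, map_smul, map_smul, map_smul] at h0
    rw [h3] at h0
    simpa [smul_eq_mul] using h0
  have hg : ∀ t : ℂ, t * z + star t * w = 0 := by
    intro t
    set g : ℂ := t * z + star t * w with hgdef
    have hr : ∀ r : ℝ, (0:ℂ) ≤ 1 + (r : ℂ) * g := by
      intro r
      have h := H ((r:ℂ) * t)
      have e : ((r:ℂ) * t) * z + star ((r:ℂ) * t) * w = (r:ℂ) * g := by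
        simp only [hgdef, star_mul', Complex.star_def, Complex.conj_ofReal, map_mul]
        ring
      rwa [e] at h
    have him : g.im = 0 := by
      have h1 := hr 1
      rw [Complex.le_def] at h1
      simpa using h1.2.symm
    have hre : g.re = 0 := by
      by_contra hre
      have h := (Complex.le_def.mp (hr (-2 / g.re))).1
      rw [Complex.add_re, Complex.one_re, Complex.re_ofReal_mul,
        div_mul_cancel₀ _ hre] at h
      norm_num at h
    exact Complex.ext hre him
  have h1 := hg 1
  have hI := hg Complex.I
  rw [star_one, one_mul, one_mul] at h1
  rw [Complex.star_def, Complex.conj_I] at hI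
  have hzw : z = w := by
    have : Complex.I * (z - w) = 0 := by ring_nf; ring_nf at hI; linear_combination hI
    rcases mul_eq_zero.mp this with h | h
    · exact absurd h Complex.I_ne_zero
    · exact sub_eq_zero.mp h
  rw [← hzw] at h1
  exact add_self_eq_zero.mp h1



/-- Let `B` be a maximal abelian C*-subalgebra of `A`
containing an approximate unit, `P` a conditional expectation onto `B`,
`n ∈ N(B)` and `α` the partial homeomorphism of the spectrum of `B`
induced by `n` (characterized by `x(n* b n) = (α x)(b) · x(n* n)` on
`dom n = {x : x(n* n) > 0}`).  If the germ of `α` at `x ∈ dom n` is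
nontrivial — witnessed by a sequence `x_i → x` in `dom n` with
`α x_i ≠ x_i` — then `P(n)(x) = 0`. -/
theorem stmt17 {A : Type*} [NormedRing A] [StarRing A] [CStarRing A]
    [NormedAlgebra ℂ A] [StarModule ℂ A] [CompleteSpace A]
    [PartialOrder A] [StarOrderedRing A]
    (B : StarSubalgebra ℂ A) (hBclosed : IsClosed (B : Set A))
    (hBcomm : ∀ b ∈ B, ∀ b' ∈ B, b * b' = b' * b)
    (hBmax : ∀ a : A, (∀ b ∈ B, a * b = b * a) → a ∈ B)
    {ι : Type*} (l : Filter ι) (e : ι → A) (he : IsApproxUnitIn B l e)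
    (P : A →ₗ[ℂ] A) (hPmem : ∀ a : A, P a ∈ B) (hPid : ∀ b ∈ B, P b = b)
    (hPpos : ∀ a : A, 0 ≤ a → 0 ≤ P a) (hPnorm : ∀ a : A, ‖P a‖ ≤ ‖a‖)
    (hPmod : ∀ b ∈ B, ∀ a : A, P (b * a) = b * P a ∧ P (a * b) = P a * b)
    (n : A) (hn : n ∈ starNormalizer B)
    (hnn : star n * n ∈ B) (hmemb : ∀ b ∈ B, star n * b * n ∈ B)
    (α : WeakDual.characterSpace ℂ ↥B → WeakDual.characterSpace ℂ ↥B)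
    (hα : ∀ y : WeakDual.characterSpace ℂ ↥B, 0 < y ⟨star n * n, hnn⟩ →
      ∀ b : ↥B, y ⟨star n * ↑b * n, hmemb ↑b b.2⟩ = α y b * y ⟨star n * n, hnn⟩)
    (x : WeakDual.characterSpace ℂ ↥B) (hx : 0 < x ⟨star n * n, hnn⟩)
    (u : ℕ → WeakDual.characterSpace ℂ ↥B)
    (hu : Filter.Tendsto u Filter.atTop (nhds x))
    (hdom : ∀ i, 0 < u i ⟨star n * n, hnn⟩)
    (hne : ∀ i, α (u i) ≠ u i) :
    x ⟨P n, hPmem n⟩ = 0 := by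
  have key : ∀ y : WeakDual.characterSpace ℂ ↥B, 0 < y ⟨star n * n, hnn⟩ →
      α y ≠ y → y ⟨P n, hPmem n⟩ = 0 := by
    intro y hy hyne
    obtain ⟨b, hb⟩ : ∃ b : ↥B, α y b ≠ y b := by
      by_contra h
      push_neg at h
      exact hyne (WeakDual.CharacterSpace.ext h)
    set β : ℂ := y b with hβ
    set γ : ℂ := α y b with hγ
    have hβγ : β - γ ≠ 0 := sub_ne_zero.mpr (Ne.symm hb)
    set b₀ : ↥B := (β - γ)⁻¹ • (b - γ • 1) with hb₀
    have hyb₀ : y b₀ = 1 := by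
      rw [hb₀, map_smul, map_sub, map_smul, map_one, smul_eq_mul, smul_eq_mul,
        mul_one, inv_mul_cancel₀ hβγ]
    have hαb₀ : α y b₀ = 0 := by
      rw [hb₀, map_smul, map_sub, map_smul, map_one, smul_eq_mul, smul_eq_mul,
        mul_one, ← hγ, sub_self, mul_zero]
    set a : A := (b₀ : A) * n with ha
    have hsa : star a * a = star n * ((star b₀ * b₀ : ↥B) : A) * n := by
      rw [ha, star_mul]
      push_cast
      simp [mul_assoc]
    have h3 : y ⟨P (star a * a), hPmem _⟩ = 0 := by
      have hmem : star a * a ∈ B := by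
        rw [hsa]; exact hmemb _ (star b₀ * b₀).2
      have heq : (⟨P (star a * a), hPmem _⟩ : ↥B)
          = ⟨star n * ((star b₀ * b₀ : ↥B) : A) * n, hmemb _ (star b₀ * b₀).2⟩ := by
        apply Subtype.ext
        show P (star a * a) = _
        rw [hPid _ hmem, hsa]
      rw [heq, hα y hy (star b₀ * b₀), map_mul, hαb₀, mul_zero, zero_mul]
    have hv := char_P_vanish_aux B hBclosed P hPmem hPid hPpos y a h3
    have h1 : (⟨P a, hPmem a⟩ : ↥B) = b₀ * ⟨P n, hPmem n⟩ := by
      apply Subtype.ext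
      show P a = (b₀ : A) * P n
      rw [ha]; exact (hPmod _ b₀.2 n).1
    rw [h1, map_mul, hyb₀, one_mul] at hv
    exact hv
  have h0 : ∀ i, u i ⟨P n, hPmem n⟩ = 0 := fun i => key (u i) (hdom i) (hne i)
  have hcont : Continuous fun φ : WeakDual.characterSpace ℂ ↥B =>
      φ (⟨P n, hPmem n⟩ : ↥B) :=
    (WeakDual.eval_continuous (⟨P n, hPmem n⟩ : ↥B)).comp continuous_subtype_val
  have hlim : Filter.Tendsto (fun i => u i ⟨P n, hPmem n⟩) Filter.atTop
      (nhds (x ⟨P n, hPmem n⟩)) := (hcont.tendsto x).comp hu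
  have hlim0 : Filter.Tendsto (fun i : ℕ => u i ⟨P n, hPmem n⟩) Filter.atTop
      (nhds 0) := by
    simp only [h0]
    exact tendsto_const_nhds
  exact tendsto_nhds_unique hlim hlim0
end

section
/- Let B be an abelian C*-subalgebra of A containing an approximate unit of A and let m, n ∈ N(B). Then the induced partial homeomorphisms satisfy α_{mn} = α_m ∘ α_n (on the appropriate domain) and α_{n*} = α_n⁻¹. -/
open scoped ComplexOrder

open WeakDual

section ConjugationInduced

variable {A : Type*} [Ring A] [StarRing A] [Algebra ℂ A] [StarModule ℂ A] [TopologicalSpace A]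
  (B : StarSubalgebra ℂ A)

/-- For `q = p*` this is the defining identity `y (p* b p) = (α_p y) b · y (p* p)` of `α_p`
on `dom p`. Keeping `q` free makes `α_{n*}` the case `(q, p) = (n, n*)`, with no `n** = n`. -/
def IsInducedByConj (q p : A) (hqp : q * p ∈ B) (hconj : ∀ b ∈ B, q * b * p ∈ B)
    (α : characterSpace ℂ B → characterSpace ℂ B) : Prop :=
  ∀ y : characterSpace ℂ B, 0 < y ⟨q * p, hqp⟩ →
    ∀ b : B, y ⟨q * b * p, hconj b b.2⟩ = α y b * y ⟨q * p, hqp⟩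

variable {B}

theorem IsInducedByConj.comp {q₁ p₁ q₂ p₂ q p : A} {h₁ : q₁ * p₁ ∈ B} {h₂ : q₂ * p₂ ∈ B}
    {h : q * p ∈ B} {hc₁ : ∀ b ∈ B, q₁ * b * p₁ ∈ B} {hc₂ : ∀ b ∈ B, q₂ * b * p₂ ∈ B}
    {hc : ∀ b ∈ B, q * b * p ∈ B} {α₁ α₂ α : characterSpace ℂ B → characterSpace ℂ B}
    (hα₁ : IsInducedByConj B q₁ p₁ h₁ hc₁ α₁) (hα₂ : IsInducedByConj B q₂ p₂ h₂ hc₂ α₂)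
    (hα : IsInducedByConj B q p h hc α) (hq : q = q₁ * q₂) (hp : p = p₂ * p₁)
    (y : characterSpace ℂ B) (hy : 0 < y ⟨q * p, h⟩) (hy₁ : 0 < y ⟨q₁ * p₁, h₁⟩) :
    α y = α₂ (α₁ y) := by
  subst hq hp
  have hkey : α₁ y ⟨q₂ * p₂, h₂⟩ * y ⟨q₁ * p₁, h₁⟩ = y ⟨q₁ * q₂ * (p₂ * p₁), h⟩ := by
    rw [← hα₁ y hy₁]
    exact congrArg y (Subtype.ext (by noncomm_ring))
  have hz : 0 < α₁ y ⟨q₂ * p₂, h₂⟩ := (pos_iff_pos_of_mul_pos (hkey ▸ hy)).mpr hy₁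
  refine DFunLike.ext _ _ fun b => mul_right_cancel₀ hy.ne' ?_
  calc α y b * y ⟨q₁ * q₂ * (p₂ * p₁), h⟩
      = y ⟨q₁ * (q₂ * b * p₂) * p₁, hc₁ _ (hc₂ b b.2)⟩ := by
        rw [← hα y hy b]
        exact congrArg y (Subtype.ext (by noncomm_ring))
    _ = α₂ (α₁ y) b * y ⟨q₁ * q₂ * (p₂ * p₁), h⟩ := by
        rw [hα₁ y hy₁ ⟨_, hc₂ b b.2⟩, hα₂ (α₁ y) hz b, mul_assoc, hkey]

theorem IsInducedByConj.leftInverse {q p : A} {hqp : q * p ∈ B} {hpq : p * q ∈ B}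
    {hc : ∀ b ∈ B, q * b * p ∈ B} {hc' : ∀ b ∈ B, p * b * q ∈ B}
    {α β : characterSpace ℂ B → characterSpace ℂ B}
    (hα : IsInducedByConj B q p hqp hc α) (hβ : IsInducedByConj B p q hpq hc' β)
    (y : characterSpace ℂ B) (hy : 0 < y ⟨q * p, hqp⟩) : β (α y) = y := by
  set c := y ⟨q * p, hqp⟩
  have hc_sq : y ⟨q * (p * q) * p, hc _ hpq⟩ = c * c := by
    rw [← map_mul]
    exact congrArg y (Subtype.ext (by simp only [MulMemClass.coe_mul]; noncomm_ring))
  have hαy : α y ⟨p * q, hpq⟩ = c :=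
    mul_right_cancel₀ hy.ne' ((hα y hy _).symm.trans hc_sq)
  refine DFunLike.ext _ _ fun b => mul_right_cancel₀ (mul_ne_zero hy.ne' hy.ne') ?_
  calc β (α y) b * (c * c)
      = y ⟨q * (p * b * q) * p, hc _ (hc' b b.2)⟩ := by
        rw [hα y hy ⟨_, hc' b b.2⟩, hβ (α y) (hαy ▸ hy), hαy, mul_assoc]
    _ = y b * (c * c) := by
        rw [mul_left_comm, ← map_mul, ← map_mul]
        exact congrArg y (Subtype.ext (by simp only [MulMemClass.coe_mul]; noncomm_ring))

end ConjugationInduced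

section Positivity

variable {A : Type*} [CStarAlgebra A] [PartialOrder A] [StarOrderedRing A]
  {B : StarSubalgebra ℂ A} [IsClosed (B : Set A)]

theorem characterSpace_apply_nonneg (y : characterSpace ℂ B) {b : B} (hb : 0 ≤ (b : A)) :
    0 ≤ y b :=
  spectrum_nonneg_of_nonneg hb
    (B.spectrum_eq ▸ CharacterSpace.apply_mem_spectrum y b)

theorem characterSpace_apply_mono (y : characterSpace ℂ B) {b b' : B} (h : (b : A) ≤ b') :
    y b ≤ y b' :=
  sub_nonneg.mp <| map_sub y b' b ▸ characterSpace_apply_nonneg y (sub_nonneg.mpr h)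

theorem characterSpace_pos_apply_star_mul_self_of_mul {m n : A}
    (hmn : star (m * n) * (m * n) ∈ B) (hnn : star n * n ∈ B) (y : characterSpace ℂ B)
    (hy : 0 < y ⟨star (m * n) * (m * n), hmn⟩) : 0 < y ⟨star n * n, hnn⟩ := by
  set c : ℂ := ((‖star m * m‖ : ℝ) : ℂ)
  have hle : y ⟨star (m * n) * (m * n), hmn⟩ ≤ c * y ⟨star n * n, hnn⟩ := by
    rw [← smul_eq_mul c, ← map_smul]
    refine characterSpace_apply_mono y ?_
    calc star (m * n) * (m * n) = star n * (star m * m) * n := by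
          rw [star_mul]; noncomm_ring
      _ ≤ ‖star m * m‖ • (star n * n) :=
          CStarAlgebra.star_left_conjugate_le_norm_smul (IsSelfAdjoint.star_mul_self m)
      _ = c • (star n * n) := (Complex.coe_smul _ _).symm
  refine lt_of_le_of_ne (characterSpace_apply_nonneg y (star_mul_self_nonneg n)) fun h0 => ?_
  rw [← h0, mul_zero] at hle
  exact hle.not_gt hy

end Positivity

theorem stmt18_general {A : Type*} [NormedRing A] [StarRing A] [CStarRing A]
    [NormedAlgebra ℂ A] [StarModule ℂ A] [CompleteSpace A]
    [PartialOrder A] [StarOrderedRing A]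
    (B : StarSubalgebra ℂ A) (hBclosed : IsClosed (B : Set A))
    (m n : A)
    (hmm : star m * m ∈ B) (hnn : star n * n ∈ B)
    (hnstar : n * star n ∈ B) (hmn : star (m * n) * (m * n) ∈ B)
    (hNm : ∀ b ∈ B, star m * b * m ∈ B) (hNn : ∀ b ∈ B, star n * b * n ∈ B)
    (hNnstar : ∀ b ∈ B, n * b * star n ∈ B)
    (hNmn : ∀ b ∈ B, star (m * n) * b * (m * n) ∈ B)
    (αm αn αmn αnstar :
      WeakDual.characterSpace ℂ ↥B → WeakDual.characterSpace ℂ ↥B)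
    (hαm : ∀ y : WeakDual.characterSpace ℂ ↥B, 0 < y ⟨star m * m, hmm⟩ →
      ∀ b : ↥B, y ⟨star m * ↑b * m, hNm ↑b b.2⟩ = αm y b * y ⟨star m * m, hmm⟩)
    (hαn : ∀ y : WeakDual.characterSpace ℂ ↥B, 0 < y ⟨star n * n, hnn⟩ →
      ∀ b : ↥B, y ⟨star n * ↑b * n, hNn ↑b b.2⟩ = αn y b * y ⟨star n * n, hnn⟩)
    (hαmn : ∀ y : WeakDual.characterSpace ℂ ↥B, 0 < y ⟨star (m * n) * (m * n), hmn⟩ →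
      ∀ b : ↥B, y ⟨star (m * n) * ↑b * (m * n), hNmn ↑b b.2⟩ =
        αmn y b * y ⟨star (m * n) * (m * n), hmn⟩)
    (hαnstar : ∀ y : WeakDual.characterSpace ℂ ↥B, 0 < y ⟨n * star n, hnstar⟩ →
      ∀ b : ↥B, y ⟨n * ↑b * star n, hNnstar ↑b b.2⟩ =
        αnstar y b * y ⟨n * star n, hnstar⟩) :
    (∀ y : WeakDual.characterSpace ℂ ↥B,
      0 < y ⟨star (m * n) * (m * n), hmn⟩ → αmn y = αm (αn y)) ∧
    (∀ y : WeakDual.characterSpace ℂ ↥B,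
      0 < y ⟨star n * n, hnn⟩ → αnstar (αn y) = y) ∧
    (∀ x : WeakDual.characterSpace ℂ ↥B,
      0 < x ⟨n * star n, hnstar⟩ → αn (αnstar x) = x) := by
  let _ : CStarAlgebra A :=
    { ‹NormedRing A›, ‹StarRing A›, ‹CStarRing A›, ‹NormedAlgebra ℂ A›, ‹StarModule ℂ A›,
      ‹CompleteSpace A› with }
  have := hBclosed
  have hαm' : IsInducedByConj B (star m) m hmm hNm αm := hαm
  have hαn' : IsInducedByConj B (star n) n hnn hNn αn := hαn
  have hαmn' : IsInducedByConj B (star (m * n)) (m * n) hmn hNmn αmn := hαmn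
  have hαnstar' : IsInducedByConj B n (star n) hnstar hNnstar αnstar := hαnstar
  refine ⟨fun y hy => ?_, hαn'.leftInverse hαnstar', hαnstar'.leftInverse hαn'⟩
  exact hαn'.comp hαm' hαmn' (star_mul m n) rfl y hy
    (characterSpace_pos_apply_star_mul_self_of_mul hmn hnn y hy)

/-- For `m, n` in the normalizer of an abelian C*-subalgebra
`B` containing an approximate unit of `A`, the induced partial homeomorphisms
of the spectrum of `B` (characterized by `y(p* b p) = (α_p y)(b)·y(p* p)` on
`dom p = {y : y(p* p) > 0}`) satisfy `α_{mn} = α_m ∘ α_n` on `dom (mn)` and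
`α_{n*} = α_n⁻¹`.  (The memberships `n* n ∈ B`, etc., follow from the
approximate-unit hypothesis and are recorded here so that the evaluation
against characters of `B` is well formed.) -/
theorem stmt18 {A : Type*} [NormedRing A] [StarRing A] [CStarRing A]
    [NormedAlgebra ℂ A] [StarModule ℂ A] [CompleteSpace A]
    [PartialOrder A] [StarOrderedRing A]
    (B : StarSubalgebra ℂ A) (hBclosed : IsClosed (B : Set A))
    (hBcomm : ∀ b ∈ B, ∀ b' ∈ B, b * b' = b' * b)
    {ι : Type*} (l : Filter ι) (e : ι → A) (he : IsApproxUnitIn B l e)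
    (m n : A) (hm : m ∈ starNormalizer B) (hn : n ∈ starNormalizer B)
    (hmm : star m * m ∈ B) (hnn : star n * n ∈ B)
    (hnstar : n * star n ∈ B) (hmn : star (m * n) * (m * n) ∈ B)
    (hNm : ∀ b ∈ B, star m * b * m ∈ B) (hNn : ∀ b ∈ B, star n * b * n ∈ B)
    (hNnstar : ∀ b ∈ B, n * b * star n ∈ B)
    (hNmn : ∀ b ∈ B, star (m * n) * b * (m * n) ∈ B)
    (αm αn αmn αnstar :
      WeakDual.characterSpace ℂ ↥B → WeakDual.characterSpace ℂ ↥B)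
    (hαm : ∀ y : WeakDual.characterSpace ℂ ↥B, 0 < y ⟨star m * m, hmm⟩ →
      ∀ b : ↥B, y ⟨star m * ↑b * m, hNm ↑b b.2⟩ = αm y b * y ⟨star m * m, hmm⟩)
    (hαn : ∀ y : WeakDual.characterSpace ℂ ↥B, 0 < y ⟨star n * n, hnn⟩ →
      ∀ b : ↥B, y ⟨star n * ↑b * n, hNn ↑b b.2⟩ = αn y b * y ⟨star n * n, hnn⟩)
    (hαmn : ∀ y : WeakDual.characterSpace ℂ ↥B, 0 < y ⟨star (m * n) * (m * n), hmn⟩ →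
      ∀ b : ↥B, y ⟨star (m * n) * ↑b * (m * n), hNmn ↑b b.2⟩ =
        αmn y b * y ⟨star (m * n) * (m * n), hmn⟩)
    (hαnstar : ∀ y : WeakDual.characterSpace ℂ ↥B, 0 < y ⟨n * star n, hnstar⟩ →
      ∀ b : ↥B, y ⟨n * ↑b * star n, hNnstar ↑b b.2⟩ =
        αnstar y b * y ⟨n * star n, hnstar⟩) :
    (∀ y : WeakDual.characterSpace ℂ ↥B,
      0 < y ⟨star (m * n) * (m * n), hmn⟩ → αmn y = αm (αn y)) ∧
    (∀ y : WeakDual.characterSpace ℂ ↥B,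
      0 < y ⟨star n * n, hnn⟩ → αnstar (αn y) = y) ∧
    (∀ x : WeakDual.characterSpace ℂ ↥B,
      0 < x ⟨n * star n, hnstar⟩ → αn (αnstar x) = x) :=
  stmt18_general B hBclosed m n hmm hnn hnstar hmn hNm hNn hNnstar hNmn αm αn αmn αnstar hαm hαn
    hαmn hαnstar
end
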